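/- From the axioms of Lagrangian spectral invariants and the Lagrangian-coincidence normalization, deduce full shift-invariance: assume ℓ : H_*(N)\{0} × G → ℝ satisfies the triangle inequality ℓ(a ∩ b, φψ) ≤ ℓ(a,φ) + ℓ(b,ψ), the duality ℓ([N], φ) = −ℓ([pt], φ⁻¹), and suppose φ, ψ ∈ G are such that ℓ([pt], ψ⁻¹φ) = ℓ([N], ψ⁻¹φ). Then ℓ(a, φ) − ℓ(a, ψ) = ℓ([N], ψ⁻¹φ) for every nonzero a ∈ H_*(N); in particular the difference ℓ(a,φ) − ℓ(a,ψ) is a constant C independent of a. -/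
import Mathlib

/-- Full shift-invariance from the axioms of Lagrangian spectral invariants and the
normalization `ℓ([pt], ψ⁻¹φ) = ℓ([N], ψ⁻¹φ)`: the difference `ℓ(a, φ) − ℓ(a, ψ)`
equals the constant `ℓ([N], ψ⁻¹φ)` for every nonzero class `a`. Here `R` is the
total homology with intersection product, whose unit `1` is the fundamental class
`[N]`, and `pt` is the point class. -/
theorem stmt14 {R G : Type*} [CommRing R] [Nontrivial R] [Group G]
    (pt : R) (hpt : pt ≠ 0) (ℓ : R → G → ℝ)
    -- triangle inequality: ℓ(a ∩ b, φψ) ≤ ℓ(a, φ) + ℓ(b, ψ) whenever a ∩ b ≠ 0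
    (htriangle : ∀ (a b : R) (φ ψ : G), a ≠ 0 → b ≠ 0 → a * b ≠ 0 →
      ℓ (a * b) (φ * ψ) ≤ ℓ a φ + ℓ b ψ)
    -- duality: ℓ([N], φ) = −ℓ([pt], φ⁻¹)
    (hdual : ∀ φ : G, ℓ 1 φ = - ℓ pt φ⁻¹)
    (φ ψ : G)
    -- normalization: ℓ([pt], ψ⁻¹φ) = ℓ([N], ψ⁻¹φ)
    (hnorm : ℓ pt (ψ⁻¹ * φ) = ℓ 1 (ψ⁻¹ * φ)) :
    ∀ a : R, a ≠ 0 → ℓ a φ - ℓ a ψ = ℓ 1 (ψ⁻¹ * φ) := by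
  intro a ha
  have h1 : ℓ a φ ≤ ℓ a ψ + ℓ 1 (ψ⁻¹ * φ) := by
    have := htriangle a 1 ψ (ψ⁻¹ * φ) ha one_ne_zero (by simpa using ha)
    simpa [mul_inv_cancel_left] using this
  have h2 : ℓ a ψ ≤ ℓ a φ + ℓ 1 (φ⁻¹ * ψ) := by
    have := htriangle a 1 φ (φ⁻¹ * ψ) ha one_ne_zero (by simpa using ha)
    simpa [mul_inv_cancel_left] using this
  have h3 : ℓ 1 (φ⁻¹ * ψ) = - ℓ 1 (ψ⁻¹ * φ) := by
    rw [hdual, mul_inv_rev, inv_inv, hnorm]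
  linarith
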